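/- arXiv:1604.02629 — 4 statements merged into one kernel-verified Lean document; each statement's English description precedes it below -/
import Mathlib

section
/- Let A be a Noetherian local ring with maximal ideal 𝔪 and let A[ε] be its ring of dual numbers. Let I′ be an ideal of A[ε] such that the image of I′ under the reduction map A[ε] → A (sending ε to 0) equals 𝔪, and such that I′ ∩ εA[ε] ⊆ εI′. If f₁, …, f_p are elements generating 𝔪 and g₁, …, g_p ∈ A are elements with f_i + εg_i ∈ I′ for every i, then I′ is generated by f₁ + εg₁, …, f_p + εg_p. -/
open DualNumber TrivSqZeroExt

/-- Let `A` be a Noetherian local ring with maximal ideal `𝔪` and let `A[ε]`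
be its ring of dual numbers.  Let `I'` be an ideal of `A[ε]` whose image under the reduction
map `A[ε] → A` (sending `ε` to `0`) equals `𝔪`, and such that `I' ∩ εA[ε] ⊆ εI'`.
If `f₁, …, f_p` generate `𝔪` and `g₁, …, g_p ∈ A` satisfy `fᵢ + ε gᵢ ∈ I'` for every `i`,
then `I'` is generated by the elements `fᵢ + ε gᵢ`. -/
theorem stmt0 (A : Type*) [CommRing A] [IsLocalRing A] [IsNoetherianRing A]
    (I' : Ideal (DualNumber A))
    (hred : I'.map (TrivSqZeroExt.fstHom A A A : DualNumber A →ₐ[A] A).toRingHom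
      = IsLocalRing.maximalIdeal A)
    (hflat : ∀ x ∈ I' ⊓ Ideal.span {(ε : DualNumber A)}, ∃ y ∈ I', x = ε * y)
    (p : ℕ) (f g : Fin p → A)
    (hf : Ideal.span (Set.range f) = IsLocalRing.maximalIdeal A)
    (hfg : ∀ i, algebraMap A (DualNumber A) (f i) + ε * algebraMap A (DualNumber A) (g i) ∈ I') :
    I' = Ideal.span (Set.range fun i =>
      algebraMap A (DualNumber A) (f i) + ε * algebraMap A (DualNumber A) (g i)) := by
  set h : Fin p → DualNumber A := fun i =>
    algebraMap A (DualNumber A) (f i) + ε * algebraMap A (DualNumber A) (g i) with hh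
  have hhfst : ∀ i, (h i).fst = f i := by
    intro i
    simp [hh, fst_mul, algebraMap_eq_inl]
  -- ε * h i = inr (f i)
  have heps_h : ∀ i, ε * h i = (inr (f i) : DualNumber A) := by
    intro i
    ext
    · simp [hh, fst_mul, algebraMap_eq_inl]
    · simp [hh, DualNumber.snd_mul, algebraMap_eq_inl, mul_comm]
  have hJ : Ideal.span (Set.range h) ≤ I' := by
    rw [Ideal.span_le]
    rintro _ ⟨i, rfl⟩
    exact hfg i
  refine le_antisymm ?_ hJ
  intro x hx
  -- first coordinate of any element of I' lies in 𝔪 = span f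
  have hfst : ∀ z : DualNumber A, z ∈ I' → z.fst ∈ Ideal.span (Set.range f) := by
    intro z hz
    rw [hf, ← hred]
    exact Ideal.mem_map_of_mem _ hz
  obtain ⟨c, hc⟩ := (Submodule.mem_span_range_iff_exists_fun A).1 (hfst x hx)
  set s : DualNumber A := ∑ i, inl (c i) * h i with hs
  have hsJ : s ∈ Ideal.span (Set.range h) := by
    refine Ideal.sum_mem _ fun i _ => Ideal.mul_mem_left _ _ ?_
    exact Ideal.subset_span ⟨i, rfl⟩
  have hsI : s ∈ I' := hJ hsJ
  have hfst0 : (x - s).fst = 0 := by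
    have : s.fst = ∑ i, c i * f i := by
      simp [hs, fst_sum, fst_mul, hhfst]
    rw [fst_sub, this]
    rw [← hc]
    simp [smul_eq_mul]
  have hxs : x - s = inr ((x - s).snd) := by
    conv_lhs => rw [← inl_fst_add_inr_snd_eq (x - s)]
    rw [hfst0, inl_zero, zero_add]
  have hmem : x - s ∈ I' ⊓ Ideal.span {(ε : DualNumber A)} := by
    constructor
    · exact I'.sub_mem hx hsI
    · refine Ideal.mem_span_singleton'.mpr ⟨inl ((x - s).snd), ?_⟩
      rw [show (ε : DualNumber A) = inr 1 from rfl, inl_mul_inr, smul_eq_mul, mul_one, ← hxs]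
  obtain ⟨y, hyI, hxy⟩ := hflat _ hmem
  obtain ⟨d, hd⟩ := (Submodule.mem_span_range_iff_exists_fun A).1 (hfst y hyI)
  -- ε * y = inr y.fst = ∑ d i • (ε * h i)
  have key : ε * y = ∑ i, inl (d i) * (ε * h i) := by
    ext
    · simp [fst_sum, fst_mul]
    · simp only [DualNumber.snd_mul, snd_sum, heps_h, snd_inr, fst_inl, fst_mul, snd_inl,
        DualNumber.fst_eps, DualNumber.snd_eps]
      rw [← hd]
      simp [smul_eq_mul, mul_comm]
  have hxsJ : x - s ∈ Ideal.span (Set.range h) := by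
    rw [hxy, key]
    refine Ideal.sum_mem _ fun i _ => Ideal.mul_mem_left _ _ ?_
    exact Ideal.mul_mem_left _ _ (Ideal.subset_span ⟨i, rfl⟩)
  have := Ideal.add_mem _ hxsJ hsJ
  simpa using this
end

section
/- Let A be a Noetherian local ring with maximal ideal 𝔪, let f₁, …, f_p ∈ 𝔪 be a regular sequence in A, and let g₁, …, g_p ∈ A be arbitrary elements. Then f₁ + εg₁, …, f_p + εg_p is a regular sequence in the ring of dual numbers A[ε]. -/
/-!
Over `R[ε]`, multiplication by `ε` and `ε ↦ 0` give a short exact sequence of `R[ε]`-modules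
`0 → R → R[ε] → R → 0`, on whose outer terms a lift `fᵢ + ε gᵢ` acts as `fᵢ`. Weak regularity
passes to extensions: if `r` is regular on `M₁` and `M₃` it is regular on `M₂`, and regularity
on `M₃` keeps `0 → M₁/rM₁ → M₂/rM₂ → M₃/rM₃ → 0` exact (snake lemma), so one can induct along
the sequence. The lifted sequence generates a proper ideal because its image under `ε ↦ 0` is
the proper ideal `(f₁, …, f_p)`.
-/

open DualNumber

namespace RingTheory.Sequence

variable {R M₁ M₂ M₃ : Type*} [CommRing R] [AddCommGroup M₁] [Module R M₁]
  [AddCommGroup M₂] [Module R M₂] [AddCommGroup M₃] [Module R M₃]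

theorem IsWeaklyRegular.of_shortExact {rs : List R} {f : M₁ →ₗ[R] M₂} {g : M₂ →ₗ[R] M₃}
    (hf : Function.Injective f) (hfg : Function.Exact f g) (hg : Function.Surjective g)
    (h₁ : IsWeaklyRegular M₁ rs) (h₃ : IsWeaklyRegular M₃ rs) :
    IsWeaklyRegular M₂ rs := by
  induction rs generalizing M₁ M₂ M₃ with
  | nil => exact .nil R M₂
  | cons r rs ih =>
    rw [isWeaklyRegular_cons_iff] at h₁ h₃ ⊢
    have hf' : Function.Injective (QuotSMulTop.map r f) := by
      have := QuotSMulTop.map_first_exact_on_four_term_exact_of_isSMulRegular_last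
        ((LinearMap.exact_zero_iff_injective PUnit f).mpr hf) hfg h₃.1
      rwa [map_zero, LinearMap.exact_zero_iff_injective] at this
    exact ⟨isSMulRegular_of_range_eq_ker hf (LinearMap.exact_iff.mp hfg).symm h₁.1 h₃.1,
      ih hf' (QuotSMulTop.map_exact r hfg hg) (QuotSMulTop.map_surjective r hg) h₁.2 h₃.2⟩

end RingTheory.Sequence

namespace DualNumber

open RingTheory.Sequence TrivSqZeroExt

variable {R : Type*} [CommRing R]

-- `R` is an `R[ε]`-algebra through `ε ↦ 0`.
attribute [local instance] TrivSqZeroExt.algebraBase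

def inrLinearMap : R →ₗ[R[ε]] R[ε] where
  toFun := inr
  map_add' := inr_add R
  map_smul' s x := by
    change inr (s.fst * x) = s * inr x
    ext <;> simp [mul_comm]

theorem exact_inrLinearMap_linearMap :
    Function.Exact (inrLinearMap (R := R)) (Algebra.linearMap R[ε] R) := by
  intro x
  change x.fst = 0 ↔ ∃ y, inr y = x
  exact ⟨fun hx => ⟨x.snd, by ext <;> simp [hx]⟩, by rintro ⟨y, rfl⟩; rfl⟩

theorem isRegular_of_isRegular_map_fst {ts : List R[ε]} (h : IsRegular R (ts.map fst)) :
    IsRegular R[ε] ts where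
  toIsWeaklyRegular := by
    have hR : IsWeaklyRegular R ts :=
      (isWeaklyRegular_map_algebraMap_iff R R ts).mp h.toIsWeaklyRegular
    exact hR.of_shortExact inr_injective exact_inrLinearMap_linearMap fst_surjective hR
  top_ne_smul := by
    rw [smul_eq_mul, Ideal.mul_top, ne_comm]
    intro htop
    apply h.top_ne_smul
    rw [smul_eq_mul, Ideal.mul_top]
    have := congrArg (Ideal.map (fstHom R R R).toRingHom) htop
    rw [Ideal.map_ofList, Ideal.map_top] at this
    exact this.symm

end DualNumber

theorem stmt1_general (A : Type*) [CommRing A]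
    (p : ℕ) (f g : Fin p → A)
    (hreg : RingTheory.Sequence.IsRegular A (List.ofFn f)) :
    RingTheory.Sequence.IsRegular (DualNumber A)
      (List.ofFn fun i =>
        algebraMap A (DualNumber A) (f i) + ε * algebraMap A (DualNumber A) (g i)) := by
  apply DualNumber.isRegular_of_isRegular_map_fst
  simpa [List.map_ofFn, Function.comp_def, TrivSqZeroExt.algebraMap_eq_inl] using hreg

/-- Let `A` be a Noetherian local ring with maximal ideal `𝔪`, let
`f₁, …, f_p ∈ 𝔪` be a regular sequence in `A`, and let `g₁, …, g_p ∈ A` be arbitrary.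
Then `f₁ + εg₁, …, f_p + εg_p` is a regular sequence in the ring of dual numbers `A[ε]`. -/
theorem stmt1 (A : Type*) [CommRing A] [IsLocalRing A] [IsNoetherianRing A]
    (p : ℕ) (f g : Fin p → A)
    (hfm : ∀ i, f i ∈ IsLocalRing.maximalIdeal A)
    (hreg : RingTheory.Sequence.IsRegular A (List.ofFn f)) :
    RingTheory.Sequence.IsRegular (DualNumber A)
      (List.ofFn fun i =>
        algebraMap A (DualNumber A) (f i) + ε * algebraMap A (DualNumber A) (g i)) :=
  stmt1_general A p f g hreg
end

section
/- Let k be a field, let A be a commutative k-algebra, let f₁, …, f_p be a regular sequence in A, and let g₁, …, g_p ∈ A be arbitrary elements. Then the quotient ring A[ε]/(f₁ + εg₁, …, f_p + εg_p) is flat as a module over the dual numbers k[ε]/(ε²). -/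
/-!
Write `F = (f₁, …, f_p)` and `J` for the ideal generated by the `fᵢ + ε gᵢ`. An element
`a + ε b` of `A[ε]` lies in `J` iff `a = ∑ cᵢ fᵢ` and `b ≡ ∑ cᵢ gᵢ (mod F)` for some `c`.
Every relation `∑ cᵢ fᵢ = 0` among a regular sequence has all `cᵢ ∈ F` (the relations are
generated by the Koszul relations), so `ε b ∈ J` iff `b ∈ F`. Hence, for a `k`-linear section
`s` of `A → A/F`, the map `(v, w) ↦ s v + ε s w` is a bijection `(A/F)² → A[ε]/J`; this makes
`A[ε]/J ≅ k[ε] ⊗_k A/F` as `k[ε]`-modules, which is flat as a base change.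
-/

open DualNumber

/-- The canonical map `k[ε] → A[ε]` of rings of dual numbers induced by `k → A`,
sending `ε` to `ε`. -/
noncomputable def dualNumberBaseMap (k A : Type*) [CommSemiring k] [CommSemiring A]
    [Algebra k A] : DualNumber k →ₐ[k] DualNumber A :=
  DualNumber.lift
    ⟨(Algebra.ofId k (DualNumber A), ε), eps_mul_eps, fun _ => Commute.all _ _⟩

open TrivSqZeroExt

namespace RingTheory.Sequence

variable {A : Type*} [CommRing A]

lemma isWeaklyRegular_ofFn_succ_iff {n : ℕ} (f : Fin (n + 1) → A) :
    IsWeaklyRegular A (List.ofFn f) ↔ IsWeaklyRegular A (List.ofFn (Fin.init f)) ∧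
      ∀ a, f (Fin.last n) * a ∈ Ideal.span (Set.range (Fin.init f)) →
        a ∈ Ideal.span (Set.range (Fin.init f)) := by
  have hofList : Ideal.ofList (List.ofFn (Fin.init f)) = Ideal.span (Set.range (Fin.init f)) := by
    simp only [Ideal.ofList, List.mem_ofFn', Set.ofPred_mem_eq]
  rw [List.ofFn_succ', List.concat_eq_append, isWeaklyRegular_append_iff, ← hofList]
  simp only [smul_eq_mul, Ideal.mul_top, isWeaklyRegular_singleton_iff,
    isSMulRegular_quotient_iff_mem_of_smul_mem]
  rfl

theorem IsWeaklyRegular.mem_span_of_sum_mul_eq_zero {n : ℕ} {f : Fin n → A}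
    (hf : IsWeaklyRegular A (List.ofFn f)) {c : Fin n → A} (hc : ∑ i, c i * f i = 0)
    (i : Fin n) : c i ∈ Ideal.span (Set.range f) := by
  induction n with
  | zero => exact i.elim0
  | succ n ih =>
    obtain ⟨hinit, hlast⟩ := (isWeaklyRegular_ofFn_succ_iff f).mp hf
    rw [Fin.sum_univ_castSucc] at hc
    have hle : Ideal.span (Set.range (Fin.init f)) ≤ Ideal.span (Set.range f) :=
      Ideal.span_mono (Set.range_comp_subset_range _ _)
    have hc_last : c (Fin.last n) ∈ Ideal.span (Set.range (Fin.init f)) := by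
      refine hlast _ ?_
      rw [mul_comm, eq_neg_of_add_eq_zero_right hc]
      exact neg_mem (Ideal.sum_mem _ fun j _ => Ideal.mul_mem_left _ _ (Ideal.subset_span ⟨j, rfl⟩))
    obtain ⟨l, hl⟩ := Ideal.mem_span_range_iff_exists_fun.mp hc_last
    -- add `lⱼ` times the Koszul relation `f_last eⱼ - fⱼ e_last` to `c`, killing its last entry
    have hc' : ∑ j, (c j.castSucc + l j * f (Fin.last n)) * Fin.init f j = 0 := by
      simp only [Fin.init] at hl ⊢
      rw [← hl, Finset.sum_mul, ← Finset.sum_add_distrib] at hc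
      rw [← hc]
      exact Finset.sum_congr rfl fun j _ => by ring
    induction i using Fin.lastCases with
    | last => exact hle hc_last
    | cast j =>
      rw [show c j.castSucc = (c j.castSucc + l j * f (Fin.last n)) - l j * f (Fin.last n) by ring]
      exact sub_mem (hle (ih hinit hc' j)) (Ideal.mul_mem_left _ _ (Ideal.subset_span ⟨_, rfl⟩))

end RingTheory.Sequence

namespace DualNumber

variable {A : Type*} [CommRing A]

theorem eps_mul_inl (b : A) : (ε * inl b : A[ε]) = inr b := by
  ext <;> simp

theorem mem_span_inl_add_inr_iff {ι : Type*} [Fintype ι] (f g : ι → A) (x : A[ε]) :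
    x ∈ Ideal.span (Set.range fun i => inl (f i) + inr (g i)) ↔
      ∃ c : ι → A, x.fst = ∑ i, c i * f i ∧
        x.snd - ∑ i, c i * g i ∈ Ideal.span (Set.range f) := by
  rw [Ideal.mem_span_range_iff_exists_fun]
  constructor
  · rintro ⟨d, rfl⟩
    refine ⟨fun i => (d i).fst, by simp [fst_sum], ?_⟩
    have hsnd : (∑ i, d i * (inl (f i) + inr (g i))).snd - ∑ i, (d i).fst * g i =
        ∑ i, (d i).snd * f i := by
      simp [snd_sum, mul_comm, Finset.sum_add_distrib]
    rw [hsnd]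
    exact Ideal.sum_mem _ fun i _ => Ideal.mul_mem_left _ _ (Ideal.subset_span ⟨i, rfl⟩)
  · rintro ⟨c, hfst, hsnd⟩
    obtain ⟨e, he⟩ := Ideal.mem_span_range_iff_exists_fun.mp hsnd
    refine ⟨fun i => inl (c i) + inr (e i), ?_⟩
    ext
    · simp [fst_sum, hfst]
    · rw [← eq_sub_iff_add_eq'.mp he]
      simp [snd_sum, Finset.sum_add_distrib, mul_comm, add_comm]

theorem inr_mem_span_inl_add_inr_iff {n : ℕ} {f : Fin n → A} (g : Fin n → A)
    (hf : RingTheory.Sequence.IsWeaklyRegular A (List.ofFn f)) (b : A) :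
    inr b ∈ Ideal.span (Set.range fun i => inl (f i) + inr (g i)) ↔
      b ∈ Ideal.span (Set.range f) := by
  rw [mem_span_inl_add_inr_iff, fst_inr, snd_inr]
  constructor
  · rintro ⟨c, hc, hb⟩
    have hcg : ∑ i, c i * g i ∈ Ideal.span (Set.range f) := Ideal.sum_mem _ fun i _ =>
      Ideal.mul_mem_right _ _ (hf.mem_span_of_sum_mul_eq_zero hc.symm i)
    simpa using add_mem hb hcg
  · exact fun hb => ⟨0, by simp, by simpa using hb⟩

theorem bijective_mk_inl_add_inr {n : ℕ} {f : Fin n → A} (g : Fin n → A)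
    (hf : RingTheory.Sequence.IsWeaklyRegular A (List.ofFn f))
    (s : A ⧸ Ideal.span (Set.range f) → A) (hs : ∀ v, Ideal.Quotient.mk _ (s v) = v) :
    Function.Bijective fun vw : (A ⧸ Ideal.span (Set.range f)) × (A ⧸ Ideal.span (Set.range f)) =>
      Ideal.Quotient.mk (Ideal.span (Set.range fun i => inl (f i) + inr (g i)))
        (inl (s vw.1) + inr (s vw.2)) := by
  have hs' : ∀ a, a - s (Ideal.Quotient.mk _ a) ∈ Ideal.span (Set.range f) := fun a =>
    Ideal.Quotient.eq.mp (hs _).symm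
  constructor
  · rintro ⟨v, w⟩ ⟨v', w'⟩ h
    have hsub := Ideal.Quotient.eq.mp h
    rw [show inl (s v) + inr (s w) - (inl (s v') + inr (s w')) =
      inl (s v - s v') + inr (s w - s w') by ext <;> simp] at hsub
    obtain rfl : v = v' := by
      obtain ⟨c, hc, -⟩ := (mem_span_inl_add_inr_iff f g _).mp hsub
      rw [fst_add, fst_inl, fst_inr, add_zero] at hc
      rw [← hs v, ← hs v', Ideal.Quotient.eq, hc]
      exact Ideal.sum_mem _ fun i _ => Ideal.mul_mem_left _ _ (Ideal.subset_span ⟨i, rfl⟩)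
    rw [sub_self, inl_zero, zero_add, inr_mem_span_inl_add_inr_iff g hf] at hsub
    rw [Prod.mk.injEq, ← hs w, ← hs w', Ideal.Quotient.eq]
    exact ⟨rfl, hsub⟩
  · intro y
    obtain ⟨x, rfl⟩ := Ideal.Quotient.mk_surjective y
    obtain ⟨c, hc⟩ := Ideal.mem_span_range_iff_exists_fun.mp (hs' x.fst)
    refine ⟨(Ideal.Quotient.mk _ x.fst, Ideal.Quotient.mk _ (x.snd - ∑ i, c i * g i)), ?_⟩
    refine (Ideal.Quotient.eq.mpr ((mem_span_inl_add_inr_iff f g _).mpr ⟨c, ?_, ?_⟩)).symm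
    · simp [hc]
    · simpa [sub_right_comm] using hs' (x.snd - ∑ i, c i * g i)

section TensorProduct

open TensorProduct

variable {R V : Type*} [CommRing R] [AddCommGroup V] [Module R V]

theorem exists_one_tmul_add_eps_tmul (w : R[ε] ⊗[R] V) :
    ∃ u v : V, (1 : R[ε]) ⊗ₜ u + (ε : R[ε]) ⊗ₜ v = w := by
  induction w using TensorProduct.induction_on with
  | zero => exact ⟨0, 0, by simp⟩
  | tmul z m =>
    refine ⟨z.fst • m, z.snd • m, ?_⟩
    rw [← smul_tmul, ← smul_tmul, ← add_tmul]
    congr 1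
    ext <;> simp
  | add w w' ih ih' =>
    obtain ⟨u, v, rfl⟩ := ih
    obtain ⟨u', v', rfl⟩ := ih'
    exact ⟨u + u', v + v', by rw [tmul_add, tmul_add]; abel⟩

theorem flat_of_bijective {M : Type*} [Module.Flat R V] [AddCommGroup M] [Module R M]
    [Module R[ε] M] [IsScalarTower R R[ε] M] (l : V →ₗ[R] M)
    (hl : Function.Bijective fun vw : V × V => l vw.1 + (ε : R[ε]) • l vw.2) :
    Module.Flat R[ε] M := by
  let Φ : R[ε] ⊗[R] V →ₗ[R[ε]] M := l.liftBaseChange R[ε]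
  have hΦ : ∀ u v, Φ ((1 : R[ε]) ⊗ₜ u + (ε : R[ε]) ⊗ₜ v) = l u + (ε : R[ε]) • l v := by
    simp [Φ, LinearMap.liftBaseChange_tmul]
  have hΦbij : Function.Bijective Φ := by
    refine ⟨fun w w' h => ?_, fun m => ?_⟩
    · obtain ⟨u, v, rfl⟩ := exists_one_tmul_add_eps_tmul w
      obtain ⟨u', v', rfl⟩ := exists_one_tmul_add_eps_tmul w'
      rw [hΦ, hΦ] at h
      obtain ⟨rfl, rfl⟩ := Prod.mk.inj (hl.injective (a₁ := (u, v)) (a₂ := (u', v')) h)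
      rfl
    · obtain ⟨⟨u, v⟩, rfl⟩ := hl.surjective m
      exact ⟨_, hΦ u v⟩
  exact Module.Flat.of_linearEquiv (LinearEquiv.ofBijective Φ hΦbij).symm

end TensorProduct

end DualNumber

/-- Let `k` be a field, `A` a commutative `k`-algebra, `f₁, …, f_p` a regular
sequence in `A` and `g₁, …, g_p ∈ A` arbitrary.  Then `A[ε]/(f₁ + εg₁, …, f_p + εg_p)` is flat
as a module over the dual numbers `k[ε]/(ε²)` (the module structure coming from the canonical
map `k[ε] → A[ε] → A[ε]/(f₁ + εg₁, …, f_p + εg_p)`). -/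
theorem stmt2 (k : Type*) [Field k] (A : Type*) [CommRing A] [Algebra k A]
    (p : ℕ) (f g : Fin p → A)
    (hreg : RingTheory.Sequence.IsRegular A (List.ofFn f))
    (I : Ideal (DualNumber A))
    (hI : I = Ideal.span (Set.range fun i =>
      algebraMap A (DualNumber A) (f i) + ε * algebraMap A (DualNumber A) (g i))) :
    letI : Module (DualNumber k) (DualNumber A ⧸ I) :=
      Module.compHom _ ((Ideal.Quotient.mk I).comp (dualNumberBaseMap k A).toRingHom)
    Module.Flat (DualNumber k) (DualNumber A ⧸ I) := by
  let : Module k[ε] (A[ε] ⧸ I) :=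
    Module.compHom _ ((Ideal.Quotient.mk I).comp (dualNumberBaseMap k A).toRingHom)
  have : IsScalarTower k k[ε] (A[ε] ⧸ I) :=
    ⟨fun c z x => by
      change Ideal.Quotient.mk I (dualNumberBaseMap k A (c • z)) * x =
        c • (Ideal.Quotient.mk I (dualNumberBaseMap k A z) * x)
      rw [map_smul, ← Ideal.Quotient.mkₐ_eq_mk k, map_smul, smul_mul_assoc]⟩
  obtain ⟨s, hs⟩ := Module.projective_lifting_property
    (Ideal.Quotient.mkₐ k (Ideal.span (Set.range f))).toLinearMap LinearMap.id
    Ideal.Quotient.mk_surjective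
  refine DualNumber.flat_of_bijective
    ((Ideal.Quotient.mkₐ k I).toLinearMap ∘ₗ (inlAlgHom k A A).toLinearMap ∘ₗ s) ?_
  simp only [algebraMap_eq_inl, DualNumber.eps_mul_inl] at hI
  subst hI
  convert DualNumber.bijective_mk_inl_add_inr g hreg.toIsWeaklyRegular s
    (LinearMap.congr_fun hs) using 2 with vw
  change Ideal.Quotient.mk _ (inl (s vw.1)) +
    Ideal.Quotient.mk _ (dualNumberBaseMap k A ε) * Ideal.Quotient.mk _ (inl (s vw.2)) = _
  rw [dualNumberBaseMap, DualNumber.lift_apply_eps, ← map_mul, DualNumber.eps_mul_inl, ← map_add]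
end

section
/- Let R be a commutative ℚ-algebra, let d : R → Ω¹_{R/ℚ} be the universal derivation into the module of Kähler differentials of R over ℚ, and let Λ denote the exterior algebra of Ω¹_{R/ℚ} over R; for a matrix M with entries in R, write dM for the matrix over Λ obtained by applying d entrywise. Suppose M₁, …, M_n are matrices over R, with M_i of size r_{i−1} × r_i, satisfying M_i M_{i+1} = 0 for all i (so they are the differentials of a complex of finite free R-modules). Then for every p ≥ 1 and every index i with i ≥ 1 and i + p ≤ n, one has the equality of matrices with entries in the p-th exterior power of Ω¹_{R/ℚ}: M_i · (dM_{i+1} · dM_{i+2} ⋯ dM_{i+p}) = (−1)^p (dM_i · dM_{i+1} ⋯ dM_{i+p−1}) · M_{i+p}. Equivalently, the collection {(1/p!) dM_i ∘ dM_{i+1} ∘ ⋯ ∘ dM_{i+p−1}} is a cycle in the Hom complex Hom(L_•, Ω^p_{R/ℚ} ⊗ L_•), where L_• is the complex of free modules with differentials M_i. -/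
noncomputable section

variable (R : Type*) [CommRing R] [Algebra ℚ R]

/-- The exterior algebra of the module of Kähler differentials `Ω¹_{R/ℚ}` over `R`. -/
abbrev LambdaOmega := ExteriorAlgebra R (KaehlerDifferential ℚ R)

variable {R}

/-- The matrix obtained from a matrix `M` over `R` by applying the universal derivation
`d : R → Ω¹_{R/ℚ}` entrywise, viewed as a matrix with entries in the exterior algebra of
`Ω¹_{R/ℚ}` (the entries have degree `1`). -/
def dMat {a b : ℕ} (M : Matrix (Fin a) (Fin b) R) : Matrix (Fin a) (Fin b) (LambdaOmega R) :=
  M.map fun x => ExteriorAlgebra.ι R ((KaehlerDifferential.D ℚ R) x)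

/-- A matrix over `R` viewed as a matrix with (degree-`0`) entries in the exterior algebra of
`Ω¹_{R/ℚ}`. -/
def sMat {a b : ℕ} (M : Matrix (Fin a) (Fin b) R) : Matrix (Fin a) (Fin b) (LambdaOmega R) :=
  M.map (algebraMap R (LambdaOmega R))

/-- The product `dM_i ⬝ dM_{i+1} ⬝ ⋯ ⬝ dM_{i+p-1}` of the entrywise differentials of the
matrices of a complex, computed in matrices over the exterior algebra of `Ω¹_{R/ℚ}`. -/
def dProd {r : ℕ → ℕ} (M : (i : ℕ) → Matrix (Fin (r i)) (Fin (r (i + 1))) R) (i : ℕ) :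
    (p : ℕ) → Matrix (Fin (r i)) (Fin (r (i + p))) (LambdaOmega R)
  | 0 => (1 : Matrix (Fin (r i)) (Fin (r i)) (LambdaOmega R))
  | p + 1 => dProd M i p * dMat (M (i + p))

lemma key_lem {a b c : ℕ} (A : Matrix (Fin a) (Fin b) R) (B : Matrix (Fin b) (Fin c) R)
    (hAB : A * B = 0) :
    sMat A * dMat B = -(dMat A * sMat B) := by
  ext x y
  have h0 : (A * B) x y = 0 := by rw [hAB]; rfl
  rw [Matrix.mul_apply] at h0
  have h1 : ∀ l, algebraMap R (LambdaOmega R) (A x l) *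
      ExteriorAlgebra.ι R (KaehlerDifferential.D ℚ R (B l y)) +
      ExteriorAlgebra.ι R (KaehlerDifferential.D ℚ R (A x l)) *
      algebraMap R (LambdaOmega R) (B l y) =
      ExteriorAlgebra.ι R (KaehlerDifferential.D ℚ R (A x l * B l y)) := by
    intro l
    rw [Derivation.leibniz, map_add, map_smul, map_smul, Algebra.smul_def, Algebra.smul_def,
      ← Algebra.commutes (B l y)]
  have h2 : (sMat A * dMat B) x y + (dMat A * sMat B) x y = 0 := by
    simp only [Matrix.mul_apply, sMat, dMat, Matrix.map_apply, ← Finset.sum_add_distrib]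
    simp only [h1]
    rw [← map_sum, ← map_sum, h0, map_zero, map_zero]
  have := eq_neg_of_add_eq_zero_left h2
  simpa using this

lemma mat_cast {r : ℕ → ℕ} (M : (i : ℕ) → Matrix (Fin (r i)) (Fin (r (i + 1))) R)
    {j k : ℕ} (h : j = k) :
    dMat (M j) = (dMat (M k)).submatrix (finCongr (congrArg r h))
      (finCongr (congrArg r (congrArg (· + 1) h))) := by
  subst h; rfl

/-- Let `R` be a commutative `ℚ`-algebra and let `M₁, …` (here `M i` is the
`(i+1)`-st matrix, of size `r i × r (i+1)`) be the differentials of a complex of finite free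
`R`-modules, i.e. `M i * M (i+1) = 0` for all `i`.  Then for every `p ≥ 1` and every `i`,
`M_i ⬝ (dM_{i+1} ⋯ dM_{i+p}) = (-1)^p (dM_i ⋯ dM_{i+p-1}) ⬝ M_{i+p}` as matrices with entries
in the `p`-th exterior power of `Ω¹_{R/ℚ}` (the `Fin.cast` reindexing merely identifies
`Fin (r (i+p+1))` with `Fin (r ((i+1)+p))`).  This is the cycle property of the local
fundamental class `{(1/p!) dM_i ∘ ⋯ ∘ dM_{i+p-1}}`. -/
theorem stmt4 {r : ℕ → ℕ} (M : (i : ℕ) → Matrix (Fin (r i)) (Fin (r (i + 1))) R)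
    (hM : ∀ i, M i * M (i + 1) = 0) (p : ℕ) (hp : 1 ≤ p) (i : ℕ) :
    (sMat (M i) * dProd M (i + 1) p).submatrix id
        (Fin.cast (congrArg r (by omega : i + p + 1 = (i + 1) + p))) =
      ((-1 : ℤ) ^ p) • (dProd M i p * sMat (M (i + p))) := by
  induction p, hp using Nat.le_induction with
  | base =>
    show sMat (M i) * dProd M (i + 1) 1 = ((-1 : ℤ) ^ 1) • (dProd M i 1 * sMat (M (i + 1)))
    simp only [dProd, Matrix.one_mul, Nat.add_zero, pow_one, neg_one_zsmul]
    exact key_lem _ _ (hM i)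
  | succ p hp ih =>
    have hcol : i + 1 + p = i + p + 1 := by omega
    have hcol' : i + 1 + p + 1 = i + p + 1 + 1 := by omega
    set e : Fin (r (i + 1 + p)) ≃ Fin (r (i + p + 1)) := finCongr (congrArg r hcol) with he
    set e' : Fin (r (i + 1 + p + 1)) ≃ Fin (r (i + p + 1 + 1)) := finCongr (congrArg r hcol')
      with he'
    set A := sMat (M i) * dProd M (i + 1) p with hA
    set C := dProd M i p * sMat (M (i + p)) with hC
    have ih' : A.submatrix id ⇑e.symm = ((-1 : ℤ) ^ p) • C := ih
    have hX : dMat (M (i + 1 + p)) = (dMat (M (i + p + 1))).submatrix ⇑e ⇑e' := mat_cast M hcol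
    have step1 : sMat (M i) * dProd M (i + 1) (p + 1) = A * dMat (M (i + 1 + p)) := by
      rw [dProd, ← Matrix.mul_assoc]
    have hAe : A = (A.submatrix id ⇑e.symm).submatrix id ⇑e := by
      ext a b; simp
    have hCN : C * dMat (M (i + p + 1)) =
        -((dProd M i p * dMat (M (i + p))) * sMat (M (i + p + 1))) := by
      rw [hC, Matrix.mul_assoc, key_lem _ _ (hM (i + p)), Matrix.mul_neg, Matrix.mul_assoc]
    show (sMat (M i) * dProd M (i + 1) (p + 1)).submatrix id
        (Fin.cast (congrArg r (by omega : i + p + 1 + 1 = (i + 1) + (p + 1)))) =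
      ((-1 : ℤ) ^ (p + 1)) • ((dProd M i p * dMat (M (i + p))) * sMat (M (i + p + 1)))
    rw [step1, hX, hAe, Matrix.submatrix_mul_equiv, ih', Matrix.smul_mul, hCN,
      pow_succ, mul_smul, neg_one_zsmul, smul_neg]
    ext a b
    simp only [Matrix.submatrix_apply, id_eq]
    congr 1


end
end
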